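/- arXiv:2512.23298 — 2 statements merged into one kernel-verified Lean document; each statement's English description precedes it below -/
import Mathlib

section
/- Optimality of cached distances: if dist : V → ℝ satisfies the Dijkstra invariants for source s in a weighted graph with positive edge weights — namely dist(s) = 0, dist(v) is the weight of some walk from s to v for each reachable v, and dist(v) ≤ dist(u) + w(u, v) for every edge (u, v) with both endpoints reachable — then dist(v) = SD(s, v) for every reachable v, where SD is the shortest-path distance. -/
/-!
Summing the relaxation inequalities `dist v ≤ dist u + w u v` along a walk from `s` (every
prefix of which is again a walk from `s`, so both endpoints of each edge are reachable)
shows that `dist v` is a lower bound for the weights of all walks from `s` to `v`.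
Being itself such a weight, it is their least element, hence their infimum.
-/

/-- Weight of a walk given as the list of its vertices. -/
def walkWeight {V : Type*} (w : V → V → ℝ) : List V → ℝ
  | [] => 0
  | [_] => 0
  | a :: b :: rest => w a b + walkWeight w (b :: rest)

def walkWeights {V : Type*} (Adj : V → V → Prop) (w : V → V → ℝ) (s t : V) : Set ℝ :=
  {x | ∃ l : List V, List.Chain' Adj (s :: l) ∧
        (s :: l).getLast (List.cons_ne_nil s l) = t ∧ walkWeight w (s :: l) = x}

/-- Shortest-path distance: infimum of weights of walks from `s` to `t`
(`0` when there is no such walk). -/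
noncomputable def netDist {V : Type*} (Adj : V → V → Prop) (w : V → V → ℝ) (s t : V) : ℝ :=
  sInf (walkWeights Adj w s t)

theorem walkWeight_concat {V : Type*} (w : V → V → ℝ) :
    ∀ (xs : List V) (h : xs ≠ []) (v : V),
      walkWeight w (xs ++ [v]) = walkWeight w xs + w (xs.getLast h) v
  | [a], _, v => by simp [walkWeight]
  | a :: b :: rest, _, v => by
      rw [List.getLast_cons (List.cons_ne_nil b rest)]
      simp only [List.cons_append, walkWeight]
      rw [← List.cons_append, walkWeight_concat w (b :: rest) (List.cons_ne_nil b rest) v]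
      ring

section Relaxed

variable {V : Type*} {Adj : V → V → Prop} {w : V → V → ℝ} {s : V} {d : V → ℝ}

theorem le_walkWeight_of_relaxed (hs : d s ≤ 0)
    (hrelax : ∀ u v : V, Adj u v →
      (walkWeights Adj w s u).Nonempty → (walkWeights Adj w s v).Nonempty →
      d v ≤ d u + w u v)
    (l : List V) (hchain : List.IsChain Adj (s :: l)) :
    d ((s :: l).getLast (List.cons_ne_nil s l)) ≤ walkWeight w (s :: l) := by
  induction l using List.reverseRecOn with
  | nil => simpa [walkWeight] using hs
  | append_singleton l v ih =>
    set u := (s :: l).getLast (List.cons_ne_nil s l)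
    have hv : (walkWeights Adj w s v).Nonempty := ⟨_, l ++ [v], hchain, by simp, rfl⟩
    rw [← List.cons_append] at hchain
    obtain ⟨hprefix, -, hlast⟩ := List.isChain_append.mp hchain
    have hadj : Adj u v := hlast _ (List.getLast?_eq_some_getLast _) _ rfl
    have hu : (walkWeights Adj w s u).Nonempty := ⟨_, l, hprefix, rfl, rfl⟩
    simp only [← List.cons_append, List.getLast_append_singleton]
    rw [walkWeight_concat w _ (List.cons_ne_nil s l)]
    linarith [ih hprefix, hrelax u v hadj hu hv]

theorem mem_lowerBounds_walkWeights_of_relaxed (hs : d s ≤ 0)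
    (hrelax : ∀ u v : V, Adj u v →
      (walkWeights Adj w s u).Nonempty → (walkWeights Adj w s v).Nonempty →
      d v ≤ d u + w u v)
    (v : V) : d v ∈ lowerBounds (walkWeights Adj w s v) := by
  rintro _ ⟨l, hchain, rfl, rfl⟩
  exact le_walkWeight_of_relaxed hs hrelax l hchain

end Relaxed

theorem stmt_8_general {V : Type*} (Adj : V → V → Prop) (w : V → V → ℝ) (s : V)
    (dist : V → ℝ)
    (hs : dist s = 0)
    (hwalk : ∀ v : V, (walkWeights Adj w s v).Nonempty → dist v ∈ walkWeights Adj w s v)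
    (hrelax : ∀ u v : V, Adj u v →
      (walkWeights Adj w s u).Nonempty → (walkWeights Adj w s v).Nonempty →
      dist v ≤ dist u + w u v) :
    ∀ v : V, (walkWeights Adj w s v).Nonempty → dist v = netDist Adj w s v := fun v hv =>
  (IsLeast.csInf_eq ⟨hwalk v hv, mem_lowerBounds_walkWeights_of_relaxed hs.le hrelax v⟩).symm

/-- optimality of cached distances. If `dist` satisfies the Dijkstra
invariants for source `s`, then `dist v` equals the shortest-path distance for every
reachable `v`. -/
theorem stmt_8 {V : Type*} [Fintype V] (Adj : V → V → Prop) (w : V → V → ℝ) (s : V)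
    (hpos : ∀ a b : V, Adj a b → 0 < w a b)
    (dist : V → ℝ)
    (hs : dist s = 0)
    (hwalk : ∀ v : V, (walkWeights Adj w s v).Nonempty → dist v ∈ walkWeights Adj w s v)
    (hrelax : ∀ u v : V, Adj u v →
      (walkWeights Adj w s u).Nonempty → (walkWeights Adj w s v).Nonempty →
      dist v ≤ dist u + w u v) :
    ∀ v : V, (walkWeights Adj w s v).Nonempty → dist v = netDist Adj w s v :=
  stmt_8_general Adj w s dist hs hwalk hrelax
end

section
/- Pruning soundness for the descendant condition: let q be the query, v, v' vertices with SD(v', q) = SD(v', v) + SD(v, q) and v ≠ q (so SD(v, q) > 0). If v is not among the k nearest facilities of v' (i.e., at least k facilities are strictly closer to v' than v), then q is not among the k nearest facilities of v', hence v' ∉ RkNN(q). -/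
open Classical in
/-- pruning soundness for the descendant condition. If the shortest
path from v' to q passes through v, and v is not among the k nearest facilities
of v', then q is not among the k nearest facilities of v' (so v' ∉ RkNN(q)). -/
theorem stmt_13 {V : Type*} (SD : V → V → ℝ) (Qf : Finset V)
    (q v v' : V) (hq : q ∈ Qf) (hv : v ∈ Qf) (k : ℕ)
    (hvq : v ≠ q)
    (hpath : SD v' q = SD v' v + SD v q)
    (hpos : 0 < SD v q)
    (hnotknn : k ≤ (Qf.filter (fun q' => SD v' q' < SD v' v)).card) :
    ¬ ((Qf.filter (fun q' => SD v' q' < SD v' q)).card < k) := by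
  have hlt : SD v' v < SD v' q := by rw [hpath]; linarith
  have hsub : (Qf.filter (fun q' => SD v' q' < SD v' v)) ⊆
      (Qf.filter (fun q' => SD v' q' < SD v' q)) := by
    intro x hx
    simp only [Finset.mem_filter] at hx ⊢
    exact ⟨hx.1, lt_trans hx.2 hlt⟩
  exact not_lt.mpr (le_trans hnotknn (Finset.card_le_card hsub))
end
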